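/- For a graph G of order n and any graph H with at least 2 vertices, the corona product satisfies γ_{R2}(G ∘ H) = 2n. -/

import Mathlib

open Finset Classical in
/-- The Roman `{2}`-domination number of a finite graph: the minimum weight of a
function `f : V → {0,1,2}` such that every vertex `v` with `f v = 0` satisfies
`∑_{u ∈ N(v)} f u ≥ 2`. -/
noncomputable def roman2 {V : Type*} [Fintype V] (G : SimpleGraph V) : ℕ :=
  sInf {w | ∃ f : V → ℕ, (∀ v, f v ≤ 2) ∧
    (∀ v, f v = 0 → 2 ≤ ∑ u ∈ Finset.univ.filter (fun u => G.Adj v u), f u) ∧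
    w = ∑ v, f v}

open Finset Classical in
/-- The domination number. -/
noncomputable def domNum {V : Type*} [Fintype V] (G : SimpleGraph V) : ℕ :=
  sInf {k | ∃ S : Finset V, S.card = k ∧ ∀ v, v ∉ S → ∃ u ∈ S, G.Adj u v}

open Finset Classical in
/-- The 2-domination number. -/
noncomputable def twoDomNum {V : Type*} [Fintype V] (G : SimpleGraph V) : ℕ :=
  sInf {k | ∃ S : Finset V, S.card = k ∧
    ∀ v, v ∉ S → 2 ≤ (S.filter (fun u => G.Adj u v)).card}


/-- The corona `G ∘ H`: one copy of `H` for each vertex of `G`, with vertex `a` of `G`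
joined to every vertex of its copy of `H`. -/
def corona {α β : Type*} (G : SimpleGraph α) (H : SimpleGraph β) :
    SimpleGraph (α ⊕ α × β) where
  Adj x y := match x, y with
    | Sum.inl a, Sum.inl b => G.Adj a b
    | Sum.inl a, Sum.inr (b, _) => a = b
    | Sum.inr (a, _), Sum.inl b => a = b
    | Sum.inr (a, w), Sum.inr (b, w') => a = b ∧ H.Adj w w'
  symm := ⟨by
    rintro (a|⟨a,w⟩) (b|⟨b,w'⟩) h <;> simp_all [SimpleGraph.adj_comm, eq_comm]⟩
  loopless := ⟨by
    rintro (a|⟨a,w⟩) h <;> simp_all⟩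

/-!
Every vertex `a` of `G` together with its copy `H_a` carries weight at least `2`: otherwise,
as `|H| ≥ 2`, some vertex of `H_a` has weight `0`, while its whole neighbourhood lies in
`{a} ∪ H_a`. Weight `2` on the vertices of `G` and `0` on the copies attains the bound `2n`.
-/

open Finset Classical

namespace SimpleGraph

variable {V : Type*} [Fintype V]

def IsRoman2Dominating (G : SimpleGraph V) (f : V → ℕ) : Prop :=
  (∀ v, f v ≤ 2) ∧ ∀ v, f v = 0 → 2 ≤ ∑ u ∈ univ.filter (fun u => G.Adj v u), f u

lemma roman2_le_sum {G : SimpleGraph V} {f : V → ℕ} (hf : G.IsRoman2Dominating f) :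
    roman2 G ≤ ∑ v, f v :=
  Nat.sInf_le ⟨f, hf.1, hf.2, rfl⟩

lemma le_roman2 {G : SimpleGraph V} {k : ℕ}
    (h : ∀ f, G.IsRoman2Dominating f → k ≤ ∑ v, f v) : k ≤ roman2 G :=
  le_csInf ⟨_, fun _ => 2, fun _ => le_rfl, fun _ h => absurd h two_ne_zero, rfl⟩
    (by rintro _ ⟨f, hf2, hdom, rfl⟩; exact h f ⟨hf2, hdom⟩)

end SimpleGraph

namespace corona

open SimpleGraph

variable {α β : Type*} [Fintype α] [Fintype β] {G : SimpleGraph α} {H : SimpleGraph β}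

lemma sum_eq_sum_inl_add_sum_inr (f : α ⊕ α × β → ℕ) :
    ∑ x, f x = ∑ a, (f (.inl a) + ∑ b, f (.inr (a, b))) := by
  rw [Fintype.sum_sum_type, Fintype.sum_prod_type, sum_add_distrib]

lemma neighbors_inr_subset (a : α) (b : β) :
    univ.filter (fun u => (corona G H).Adj (.inr (a, b)) u) ⊆
      insert (.inl a) (univ.map ⟨fun b' => .inr (a, b'), fun _ _ h => by simpa using h⟩) := by
  rintro (a' | ⟨a', b'⟩) hu <;> simp only [mem_filter, mem_univ, true_and] at hu
  · simp [show a = a' from hu]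
  · simp [show a = a' from hu.1]

lemma sum_neighbors_inr_le (f : α ⊕ α × β → ℕ) (a : α) (b : β) :
    ∑ u ∈ univ.filter (fun u => (corona G H).Adj (.inr (a, b)) u), f u ≤
      f (.inl a) + ∑ b', f (.inr (a, b')) := by
  refine (sum_le_sum_of_subset (neighbors_inr_subset a b)).trans_eq ?_
  rw [sum_insert (by simp), sum_map]
  rfl

lemma two_le_inl_add_sum_inr (hβ : 2 ≤ Fintype.card β) {f : α ⊕ α × β → ℕ}
    (hf : (corona G H).IsRoman2Dominating f) (a : α) :
    2 ≤ f (.inl a) + ∑ b, f (.inr (a, b)) := by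
  by_cases hbag : 2 ≤ ∑ b, f (.inr (a, b))
  · omega
  obtain ⟨b, hb⟩ : ∃ b, f (.inr (a, b)) = 0 := by
    by_contra! hpos
    have : Fintype.card β ≤ ∑ b, f (.inr (a, b)) := by
      simpa using sum_le_sum fun b (_ : b ∈ univ) => Nat.one_le_iff_ne_zero.mpr (hpos b)
    omega
  exact (hf.2 _ hb).trans (sum_neighbors_inr_le f a b)

lemma isRoman2Dominating_two_on_base (G : SimpleGraph α) (H : SimpleGraph β) :
    (corona G H).IsRoman2Dominating (Sum.elim (fun _ => 2) fun _ => 0) := by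
  refine ⟨by rintro (_ | _) <;> simp, ?_⟩
  rintro (a | ⟨a, b⟩) h
  · simp at h
  · have hadj : Sum.inl a ∈ univ.filter fun u => (corona G H).Adj (.inr (a, b)) u := by
      simp only [mem_filter, mem_univ, true_and]
      exact rfl
    exact single_le_sum (f := Sum.elim (fun _ => 2) fun _ => 0) (fun _ _ => Nat.zero_le _) hadj

end corona

open corona SimpleGraph in
theorem roman2_corona {V W : Type*} [Fintype V] [Fintype W]
    (G : SimpleGraph V) (H : SimpleGraph W) (hW : 2 ≤ Fintype.card W) :
    roman2 (corona G H) = 2 * Fintype.card V := by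
  have hbase : ∑ x : V ⊕ V × W, Sum.elim (fun _ => 2) (fun _ => 0) x = 2 * Fintype.card V := by
    simp [mul_comm]
  refine le_antisymm (hbase ▸ roman2_le_sum (isRoman2Dominating_two_on_base G H)) ?_
  refine le_roman2 fun f hf => ?_
  calc 2 * Fintype.card V = ∑ _a : V, 2 := by simp [mul_comm]
    _ ≤ ∑ a, (f (.inl a) + ∑ w, f (.inr (a, w))) := sum_le_sum fun a _ => two_le_inl_add_sum_inr hW hf a
    _ = ∑ x, f x := (sum_eq_sum_inl_add_sum_inr f).symm
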